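/- Let f be a homeomorphism of a compact metric space X possessing a topological horseshoe Δ, invariant under f^q, with associated integer r ≥ 2 and uniform bound B on the cardinality of the fibers of the factor map π₁. Then f has positive topological entropy, and for every n ≥ 1 the number of fixed points of f^{qn} in Δ is at least rⁿ/B; in particular some power of f has exponential growth of periodic points. -/

import Mathlib

open Filter Topology Set

noncomputable section

/-- Group structure on the group of self-homeomorphisms of a topological space,
so that `f ^ n` denotes the `n`-th iterate (with `n : ℕ` or `n : ℤ`). -/
instance Homeomorph.instGroupSelf {X : Type*} [TopologicalSpace X] : Group (X ≃ₜ X) where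
  mul f g := g.trans f
  one := Homeomorph.refl X
  inv := Homeomorph.symm
  mul_assoc f g h := Homeomorph.ext fun _ => rfl
  one_mul f := Homeomorph.ext fun _ => rfl
  mul_one f := Homeomorph.ext fun _ => rfl
  inv_mul_cancel f := Homeomorph.ext fun x => f.symm_apply_apply x

/-- The two-torus `T² = ℝ²/ℤ²`. -/
abbrev Torus : Type := AddCircle (1 : ℝ) × AddCircle (1 : ℝ)

/-- The vertical annulus `A = (ℝ/ℤ) × ℝ`. -/
abbrev VertAnnulus : Type := AddCircle (1 : ℝ) × ℝ

/-- The canonical covering projection `ℝ² → T²`. -/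
def torusProj : ℝ × ℝ → Torus :=
  fun p => ((p.1 : AddCircle (1 : ℝ)), (p.2 : AddCircle (1 : ℝ)))

/-- The covering projection from the vertical annulus to the torus. -/
def annProj : VertAnnulus → Torus := fun p => (p.1, (p.2 : AddCircle (1 : ℝ)))

/-- A homeomorphism is (topologically) transitive if it has a dense orbit. -/
def IsTransitive {X : Type*} [TopologicalSpace X] (f : X ≃ₜ X) : Prop :=
  ∃ z : X, Dense (Set.range fun n : ℤ => (f ^ n) z)

/-- `g` and `h` are isotopic: there is a continuous path of homeomorphisms
joining `h` (at time 0) to `g` (at time 1). -/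
def Isotopic {X : Type*} [TopologicalSpace X] (g h : X → X) : Prop :=
  ∃ H : ℝ → X → X, Continuous (fun p : ℝ × X => H p.1 p.2) ∧
    (∀ t : ℝ, ∃ e : X ≃ₜ X, H t = ⇑e) ∧ H 0 = h ∧ H 1 = g

/-- The Bernoulli shift on `Σ = {0,…,r−1}^ℤ`. -/
def bernoulliShift (r : ℕ) : (ℤ → Fin r) → (ℤ → Fin r) := fun s i => s (i + 1)

/-- `Δ` is a topological horseshoe for the homeomorphism `f`. -/
def IsTopologicalHorseshoe {X : Type*} [TopologicalSpace X] (f : X ≃ₜ X) (Δ : Set X) : Prop :=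
  IsCompact Δ ∧
  ∃ q : ℕ, 1 ≤ q ∧ ⇑(f ^ q) '' Δ = Δ ∧
    ∃ (Y : Type) (_ : TopologicalSpace Y) (_ : CompactSpace Y) (_ : T2Space Y)
      (g : Y → Y) (r : ℕ) (π₁ : Y → X) (π₂ : Y → (ℤ → Fin r)),
      2 ≤ r ∧ Continuous g ∧
      Continuous π₁ ∧ Set.range π₁ = Δ ∧ (∀ y, π₁ (g y) = (f ^ q) (π₁ y)) ∧
      (∃ B : ℕ, ∀ x : X, (π₁ ⁻¹' {x}).Finite ∧ (π₁ ⁻¹' {x}).ncard ≤ B) ∧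
      Continuous π₂ ∧ Function.Surjective π₂ ∧
      (∀ y, π₂ (g y) = bernoulliShift r (π₂ y)) ∧
      (∀ (n : ℕ) (s : ℤ → Fin r), (bernoulliShift r)^[n] s = s →
        ∃ y : Y, π₂ y = s ∧ g^[n] y = y)

/-- `f` has a topological horseshoe. -/
def HasTopologicalHorseshoe {X : Type*} [TopologicalSpace X] (f : X ≃ₜ X) : Prop :=
  ∃ Δ : Set X, IsTopologicalHorseshoe f Δ

/-- The ω-limit set `ω_f(z) = ⋂_{k≥0} closure {f^n(z) : n ≥ k}`. -/
def omegaLimitOf {X : Type*} [TopologicalSpace X] (f : X → X) (z : X) : Set X :=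
  ⋂ k : ℕ, closure ((fun n : ℕ => f^[n] z) '' Set.Ici k)

/-- The α-limit set `α_f(z) = ⋂_{k≤0} closure {f^n(z) : n ≤ k}` of a homeomorphism,
i.e. the ω-limit set of the inverse homeomorphism. -/
def alphaLimitOf {X : Type*} [TopologicalSpace X] (f : X ≃ₜ X) (z : X) : Set X :=
  omegaLimitOf (⇑f.symm) z

/-- `G` is a lift of the torus homeomorphism `g` to the plane. -/
def IsLiftR2 (g : Torus ≃ₜ Torus) (G : (ℝ × ℝ) ≃ₜ (ℝ × ℝ)) : Prop :=
  ∀ p : ℝ × ℝ, torusProj (G p) = g (torusProj p)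

/-- `H` is a lift of the torus homeomorphism `g` to the vertical annulus. -/
def IsLiftAnn (g : Torus ≃ₜ Torus) (H : VertAnnulus ≃ₜ VertAnnulus) : Prop :=
  ∀ p : VertAnnulus, annProj (H p) = g (annProj p)

/-- The Misiurewicz–Ziemian rotation set of a lift `G` of a torus homeomorphism:
all limits of sequences `(G^{n_k}(z_k) − z_k)/n_k` with `n_k → ∞`. -/
def rotSet (G : (ℝ × ℝ) ≃ₜ (ℝ × ℝ)) : Set (ℝ × ℝ) :=
  {v | ∃ (n : ℕ → ℕ) (z : ℕ → ℝ × ℝ), StrictMono n ∧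
    Filter.Tendsto (fun k => ((n k : ℝ))⁻¹ • ((G ^ (n k)) (z k) - z k))
      Filter.atTop (nhds v)}

/-- A set is a non-degenerate line segment with rational slope: it is a segment with
distinct endpoints whose direction is a real multiple of a nonzero integer vector. -/
def IsRationalSlopeSegment (ρ : Set (ℝ × ℝ)) : Prop :=
  ∃ a b : ℝ × ℝ, a ≠ b ∧ ρ = segment ℝ a b ∧
    ∃ v : ℤ × ℤ, v ≠ (0, 0) ∧ ∃ t : ℝ, b - a = t • (((v.1 : ℝ), (v.2 : ℝ)) : ℝ × ℝ)

/-- A set is a non-degenerate horizontal segment (direction `±(1,0)`). -/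
def IsHorizontalSegment (ρ : Set (ℝ × ℝ)) : Prop :=
  ∃ a b : ℝ × ℝ, a ≠ b ∧ ρ = segment ℝ a b ∧ a.2 = b.2

/-- The linear torus map induced by an integer matrix. -/
def matrixTorusMap (A : Matrix (Fin 2) (Fin 2) ℤ) : Torus → Torus :=
  fun p => (A 0 0 • p.1 + A 0 1 • p.2, A 1 0 • p.1 + A 1 1 • p.2)

/-- The linear planar map induced by an integer matrix. -/
def matMap (A : Matrix (Fin 2) (Fin 2) ℤ) : ℝ × ℝ → ℝ × ℝ :=
  fun p => ((A 0 0 : ℝ) * p.1 + (A 0 1 : ℝ) * p.2, (A 1 0 : ℝ) * p.1 + (A 1 1 : ℝ) * p.2)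

/-- `g` is isotopic to a Dehn twist: it is isotopic to the linear map induced by a matrix
`A ∈ GL(2,ℤ)` conjugate (in GL(2,ℤ)) to `[[1, m], [0, 1]]` for some `m ≠ 0`. -/
def IsotopicToDehnTwist (g : Torus ≃ₜ Torus) : Prop :=
  ∃ (m : ℤ) (A P : Matrix (Fin 2) (Fin 2) ℤ), m ≠ 0 ∧ IsUnit A.det ∧ IsUnit P.det ∧
    A * P = P * !![1, m; 0, 1] ∧ Isotopic (⇑g) (matrixTorusMap A)

/-- The vertical rotation set of an annulus homeomorphism `H`:
`ρ_V(H) = ⋂_{k≥1} closure ( ⋃_{n≥k} { pr₂(Hⁿ(z) − z)/n : z ∈ A } )`. -/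
def vertRotSet (H : VertAnnulus ≃ₜ VertAnnulus) : Set ℝ :=
  ⋂ k : ℕ, closure (⋃ n : ℕ, ⋃ _ : k + 1 ≤ n,
    {x : ℝ | ∃ z : VertAnnulus, x = (((H ^ n) z).2 - z.2) / n})

/-- `z` is a non-wandering point of `f`. -/
def IsNonWanderingPt {X : Type*} [TopologicalSpace X] (f : X → X) (z : X) : Prop :=
  ∀ U ∈ 𝓝 z, ∃ n : ℕ, 1 ≤ n ∧ (f^[n] '' U ∩ U).Nonempty

/-- The Euclidean inner product on `ℝ²`. -/
def dot2 (u v : ℝ × ℝ) : ℝ := u.1 * v.1 + u.2 * v.2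

/-- The Euclidean normalization of a vector of `ℝ²`. -/
def normalize2 (u : ℝ × ℝ) : ℝ × ℝ := (Real.sqrt (u.1 ^ 2 + u.2 ^ 2))⁻¹ • u

/-- There is a Birkhoff connection from `z₁` to `z₂` for `f`. -/
def BirkhoffConnection {X : Type*} [TopologicalSpace X] (f : X → X) (z₁ z₂ : X) : Prop :=
  ∀ W₁ ∈ 𝓝 z₁, ∀ W₂ ∈ 𝓝 z₂, ∃ n : ℕ, 1 ≤ n ∧ (W₁ ∩ f^[n] ⁻¹' W₂).Nonempty

/-- `c : ℤ/pℤ → X` is a Birkhoff cycle for `f`. -/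
def IsBirkhoffCycle {X : Type*} [TopologicalSpace X] (f : X → X) {p : ℕ} (c : ZMod p → X) :
    Prop :=
  0 < p ∧ ∀ i : ZMod p, BirkhoffConnection f (c i) (c (i + 1))


/-!
Periodic points: each `n`-periodic symbol sequence lifts to a `g`-periodic point of period `n`,
whose `π₁`-image is fixed by `f^{qn}`. Distinct sequences have disjoint `π₂`-fibres, so the
`rⁿ` lifts are distinct, and since `π₁` is at most `B`-to-one their images are at least `rⁿ/B`
points.

Entropy: fix a block length `m` with `2B ≤ r^m`. The length-`m` cylinders pull back to disjoint
closed sets of `Y`; as `π₁` is at most `B`-to-one, there is `ε > 0` such that every `ε`-ball of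
`X` meets the `π₁`-images of at most `B` of them. A point that `ε`-shadows the `f`-orbit of
`π₁ y` for `qmn` steps therefore determines the first `n` blocks of `π₂ y` up to `Bⁿ` choices.
All `r^{mn}` block patterns occur, so every `(ε, qmn)`-dynamical cover of `X` has at least
`(r^m / B)ⁿ ≥ 2ⁿ` points, and the entropy of `f` is at least `log 2 / (qm)`.
-/

open Function Dynamics Finset

lemma Homeomorph.coe_pow {X : Type*} [TopologicalSpace X] (f : X ≃ₜ X) (n : ℕ) :
    ⇑(f ^ n) = (⇑f)^[n] := by
  induction n with
  | zero => rfl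
  | succ n ih => rw [pow_succ, iterate_succ, ← ih]; rfl

lemma bernoulliShift_iterate_apply {r : ℕ} (k : ℕ) (s : ℤ → Fin r) (i : ℤ) :
    (bernoulliShift r)^[k] s i = s (i + k) := by
  induction k generalizing s with
  | zero => simp
  | succ k ih =>
    rw [iterate_succ_apply, ih, bernoulliShift]
    push_cast
    ring_nf

def periodicExtension {α : Type*} {N : ℕ} [NeZero N] (w : Fin N → α) (i : ℤ) : α :=
  w (Fin.ofNat N (i % N).toNat)

section PeriodicExtension

variable {α : Type*} {N : ℕ} [NeZero N]

@[simp]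
lemma periodicExtension_natCast (w : Fin N → α) (k : Fin N) :
    periodicExtension w (k : ℕ) = w k := by
  have hk : ((k : ℕ) : ℤ) % N = (k : ℕ) := Int.emod_eq_of_lt (by positivity) (by omega)
  simp [periodicExtension, hk]

lemma periodicExtension_add_period (w : Fin N → α) (i : ℤ) :
    periodicExtension w (i + N) = periodicExtension w i := by
  simp [periodicExtension]

lemma periodicExtension_injective : Injective (periodicExtension (α := α) (N := N)) :=
  fun w w' h => funext fun k => by
    rw [← periodicExtension_natCast w, ← periodicExtension_natCast w', h]

lemma bernoulliShift_iterate_periodicExtension {r : ℕ} (w : Fin N → Fin r) :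
    (bernoulliShift r)^[N] (periodicExtension w) = periodicExtension w :=
  funext fun i => by rw [bernoulliShift_iterate_apply, periodicExtension_add_period]

end PeriodicExtension

def cylinder {r : ℕ} (m : ℕ) (w : Fin m → Fin r) : Set (ℤ → Fin r) :=
  {s | ∀ i : Fin m, s i = w i}

lemma isClosed_cylinder {r m : ℕ} (w : Fin m → Fin r) : IsClosed (cylinder m w) := by
  simp only [cylinder, Set.ofPred_forall]
  exact isClosed_iInter fun i => isClosed_eq (continuous_apply _) continuous_const

lemma pairwise_disjoint_cylinder {r m : ℕ} : Pairwise (Disjoint on cylinder (r := r) m) :=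
  fun _ _ hne => Set.disjoint_left.2 fun _ hs hs' =>
    hne (funext fun i => (hs i).symm.trans (hs' i))

lemma exists_bernoulliShift_iterate_mem_cylinder {r m n : ℕ} [NeZero m] [NeZero n]
    (W : Fin n → Fin m → Fin r) :
    ∃ s, ∀ j : Fin n, (bernoulliShift r)^[m * j] s ∈ cylinder m (W j) := by
  refine ⟨fun k => periodicExtension W (k / m) (Fin.ofNat m (k % m).toNat), fun j i => ?_⟩
  have hm : (0 : ℤ) < m := by have := NeZero.pos m; omega
  obtain ⟨hdiv, hmod⟩ := (Int.ediv_emod_unique (a := (i : ℕ) + (m : ℤ) * (j : ℕ))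
    (q := (j : ℕ)) (r := (i : ℕ)) hm).2 ⟨by ring, by positivity, by omega⟩
  simp [bernoulliShift_iterate_apply, hdiv, hmod]

section FiniteToOne

variable {X Y ι : Type*} {π : Y → X} {B : ℕ}

lemma card_le_of_forall_exists_mem_fiber
    (hfib : ∀ x, (π ⁻¹' {x}).Finite ∧ (π ⁻¹' {x}).ncard ≤ B) {C : ι → Set Y}
    (hdisj : Pairwise (Disjoint on C)) {x : X} {s : Finset ι} (hs : ∀ i ∈ s, ∃ y ∈ C i, π y = x) :
    s.card ≤ B := by
  rcases s.eq_empty_or_nonempty with rfl | ⟨i₀, hi₀⟩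
  · simp
  have : Nonempty Y := ⟨(hs i₀ hi₀).choose⟩
  choose! φ hφC hφx using hs
  have hφ : Set.InjOn φ s := fun i hi j hj hij =>
    hdisj.eq (Set.not_disjoint_iff.2 ⟨φ i, hφC i hi, hij ▸ hφC j hj⟩)
  rw [← Set.ncard_coe_finset]
  exact (Set.ncard_le_ncard_of_injOn φ hφx hφ (hfib x).1).trans (hfib x).2

variable [MetricSpace X] [CompactSpace X] [TopologicalSpace Y] [CompactSpace Y] [Finite ι]

lemma exists_pos_forall_finset_near_card_le (hπ : Continuous π)
    (hfib : ∀ x, (π ⁻¹' {x}).Finite ∧ (π ⁻¹' {x}).ncard ≤ B) {C : ι → Set Y}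
    (hC : ∀ i, IsClosed (C i)) (hdisj : Pairwise (Disjoint on C)) :
    ∃ ε > 0, ∀ x, ∃ D : Finset ι, D.card ≤ B ∧
      ∀ i, ∀ y ∈ C i, dist (π y) x < ε → i ∈ D := by
  classical
  have : Fintype ι := Fintype.ofFinite ι
  -- `V x` is an open neighbourhood of `x` missing the compact sets `π '' C i` that miss `x`.
  set V : X → Set X := fun x => ⋂ (i) (_ : x ∉ π '' C i), (π '' C i)ᶜ
  have hV : ∀ x, IsOpen (V x) := fun x => isOpen_iInter_of_finite fun i =>
    isOpen_iInter_of_finite fun _ => ((hC i).isCompact.image hπ).isClosed.isOpen_compl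
  obtain ⟨ε, hε, hleb⟩ := lebesgue_number_lemma_of_metric isCompact_univ hV
    fun x _ => Set.mem_iUnion.2 ⟨x, Set.mem_iInter₂.2 fun _ hx => hx⟩
  refine ⟨ε, hε, fun x => ?_⟩
  obtain ⟨x₀, hx₀⟩ := hleb x (Set.mem_univ x)
  refine ⟨univ.filter fun i => x₀ ∈ π '' C i, ?_, fun i y hy hyx => ?_⟩
  · exact card_le_of_forall_exists_mem_fiber hfib hdisj fun i hi => (mem_filter.1 hi).2
  · by_contra hi
    exact Set.mem_iInter₂.1 (hx₀ (Metric.mem_ball.2 hyx)) i (by simpa using hi) ⟨y, hy, rfl⟩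

end FiniteToOne

lemma two_pow_le_of_pow_le_pow_mul {a B N n : ℕ} (hB : 0 < B) (ha : 2 * B ≤ a)
    (h : a ^ n ≤ B ^ n * N) : 2 ^ n ≤ N :=
  Nat.le_of_mul_le_mul_left
    (calc B ^ n * 2 ^ n = (2 * B) ^ n := by ring
      _ ≤ a ^ n := Nat.pow_le_pow_left ha n
      _ ≤ B ^ n * N := h)
    (pow_pos hB n)

lemma exists_pos_two_mul_le_pow {r : ℕ} (hr : 2 ≤ r) (B : ℕ) : ∃ k, 0 < k ∧ 2 * B ≤ r ^ k :=
  ⟨2 * B + 1, by omega, (Nat.lt_pow_self hr).le.trans' (by omega)⟩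

open scoped ENNReal in
lemma Dynamics.coverEntropyEntourage_pos_of_eventually_pow_le {X : Type*} {T : X → X}
    {F : Set X} {U : SetRel X X} {k : ℕ} (hk : k ≠ 0) {b : ℕ} (hb : 1 < b)
    (h : ∀ᶠ n in Filter.atTop, (b : ℕ∞) ^ n ≤ coverMincard T F U (k * n)) :
    0 < coverEntropyEntourage T F U := by
  have hmono : Monotone fun n => (coverMincard T F U n : ℝ≥0∞) :=
    fun _ _ hmn => ENat.toENNReal_mono (coverMincard_monotone_time T F U hmn)
  have hgrowth : ENNReal.log (b : ℝ≥0∞) ≤ k * coverEntropyEntourage T F U := by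
    rw [coverEntropyEntourage, ← hmono.expGrowthSup_comp_mul hk, ← ExpGrowth.expGrowthSup_pow]
    refine ExpGrowth.expGrowthSup_eventually_monotone (h.mono fun n hn => ?_)
    simpa using ENat.toENNReal_mono hn
  have hlog : 0 < ENNReal.log (b : ℝ≥0∞) := by simpa using hb
  rcases EReal.mul_pos_iff.1 (hlog.trans_le hgrowth) with hpos | hneg
  · exact hpos.2
  · exact absurd hneg.1 (by simp)

section Horseshoe

variable {X Y : Type*} {r B : ℕ} {g : Y → Y} {π₁ : Y → X} {π₂ : Y → (ℤ → Fin r)}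

lemma exists_finset_fixedPoints_card_ge {F : X → X} (hsemi₁ : Semiconj π₁ g F)
    (hfib : ∀ x, (π₁ ⁻¹' {x}).Finite ∧ (π₁ ⁻¹' {x}).ncard ≤ B)
    (hper : ∀ (n : ℕ) (s : ℤ → Fin r), (bernoulliShift r)^[n] s = s →
      ∃ y : Y, π₂ y = s ∧ g^[n] y = y) (n : ℕ) [NeZero n] :
    ∃ S : Finset X, ↑S ⊆ {x ∈ Set.range π₁ | F^[n] x = x} ∧ r ^ n ≤ B * S.card := by
  classical
  choose y hyπ hyper using fun w : Fin n → Fin r =>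
    hper n _ (bernoulliShift_iterate_periodicExtension w)
  have hdisj : Pairwise (Disjoint on fun w : Fin n → Fin r => π₂ ⁻¹' {periodicExtension w}) :=
    fun _ _ hne => (Set.disjoint_singleton.2 (periodicExtension_injective.ne hne)).preimage π₂
  refine ⟨univ.image (π₁ ∘ y), ?_, ?_⟩
  · rintro _ hx
    obtain ⟨w, -, rfl⟩ := mem_image.1 hx
    exact ⟨⟨y w, rfl⟩, by rw [comp_apply, ← (hsemi₁.iterate_right n).eq, hyper]⟩
  · calc r ^ n = #(univ : Finset (Fin n → Fin r)) := by simp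
      _ ≤ B * #(univ.image (π₁ ∘ y)) := card_le_mul_card_image _ _ fun _ _ =>
          card_le_of_forall_exists_mem_fiber hfib hdisj fun w hw =>
            ⟨y w, hyπ w, (mem_filter.1 hw).2⟩

variable [MetricSpace X] {T : X → X} {q : ℕ}

lemma pow_le_pow_mul_card_of_isDynCoverOf {m n : ℕ} [NeZero m] [NeZero n] {ε : ℝ} (hq : 0 < q)
    (hsemi₁ : Semiconj π₁ g T^[q]) (hπ₂s : Surjective π₂)
    (hsemi₂ : Semiconj π₂ g (bernoulliShift r))
    (hnear : ∀ x, ∃ D : Finset (Fin m → Fin r), D.card ≤ B ∧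
      ∀ w, ∀ y ∈ π₂ ⁻¹' cylinder m w, dist (π₁ y) x < ε → w ∈ D)
    {t : Finset X} (ht : IsDynCoverOf T Set.univ {p | dist p.1 p.2 < ε} (q * m * n) t) :
    (r ^ m) ^ n ≤ B ^ n * t.card := by
  classical
  choose s hs using fun W : Fin n → Fin m → Fin r => exists_bernoulliShift_iterate_mem_cylinder W
  choose y hy using fun W => hπ₂s (s W)
  have hblock (W) (j : Fin n) : g^[m * j] (y W) ∈ π₂ ⁻¹' cylinder m (W j) := by
    rw [Set.mem_preimage, (hsemi₂.iterate_right _).eq, hy]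
    exact hs W j
  have hshadow (W) :
      ∃ z ∈ t, ∀ j : Fin n, dist (π₁ (g^[m * j] (y W))) (T^[q * (m * j)] z) < ε := by
    obtain ⟨z, hzt, hz⟩ := ht (Set.mem_univ (π₁ (y W)))
    refine ⟨z, hzt, fun j => ?_⟩
    have hj : q * (m * j) < q * m * n := by
      rw [← mul_assoc]
      exact Nat.mul_lt_mul_of_pos_left j.2 (Nat.mul_pos hq (NeZero.pos m))
    rw [(hsemi₁.iterate_right _).eq, ← iterate_mul]
    exact mem_dynEntourage.1 hz _ hj
  choose ψ hψt hψ using hshadow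
  choose D hDcard hD using hnear
  have hfiber : ∀ z ∈ t, #{W | ψ W = z} ≤ B ^ n := fun z _ =>
    calc #{W | ψ W = z} ≤ #(Fintype.piFinset fun j : Fin n => D (T^[q * (m * j)] z)) :=
          card_le_card fun W hW => Fintype.mem_piFinset.2 fun j =>
            hD _ _ _ (hblock W j) ((mem_filter.1 hW).2 ▸ hψ W j)
      _ ≤ B ^ n := by
          rw [Fintype.card_piFinset]
          exact (prod_le_pow_card _ _ _ fun j _ => hDcard _).trans_eq (by simp)
  calc (r ^ m) ^ n = #(univ : Finset (Fin n → Fin m → Fin r)) := by simp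
    _ ≤ B ^ n * #t := card_le_mul_card_image_of_maps_to (fun W _ => hψt W) _ hfiber

theorem coverEntropy_pos_of_horseshoe [CompactSpace X] [TopologicalSpace Y] [CompactSpace Y]
    (hq : 0 < q) (hr : 2 ≤ r) (hπ₁ : Continuous π₁) (hsemi₁ : Semiconj π₁ g T^[q])
    (hfib : ∀ x, (π₁ ⁻¹' {x}).Finite ∧ (π₁ ⁻¹' {x}).ncard ≤ B) (hB : 0 < B)
    (hπ₂ : Continuous π₂) (hπ₂s : Surjective π₂) (hsemi₂ : Semiconj π₂ g (bernoulliShift r)) :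
    0 < coverEntropy T Set.univ := by
  obtain ⟨m, hm, h2B⟩ := exists_pos_two_mul_le_pow hr B
  have : NeZero m := ⟨hm.ne'⟩
  obtain ⟨ε, hε, hnear⟩ := exists_pos_forall_finset_near_card_le hπ₁ hfib
    (fun w => (isClosed_cylinder w).preimage hπ₂)
    (fun _ _ hne => (pairwise_disjoint_cylinder hne).preimage π₂)
  have hU : {p : X × X | dist p.1 p.2 < ε} ∈ uniformity X := Metric.dist_mem_uniformity hε
  refine lt_of_lt_of_le ?_ (coverEntropyEntourage_le_coverEntropy T Set.univ hU)
  refine coverEntropyEntourage_pos_of_eventually_pow_le (k := q * m) (by positivity) one_lt_two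
    (Filter.eventually_atTop.2 ⟨1, fun n hn => le_iInf₂ fun t ht => ?_⟩)
  have : NeZero n := ⟨by omega⟩
  exact_mod_cast two_pow_le_of_pow_le_pow_mul hB h2B
    (pow_le_pow_mul_card_of_isDynCoverOf hq hsemi₁ hπ₂s hsemi₂ hnear ht)

end Horseshoe

theorem statement15_general {X : Type*} [MetricSpace X] [CompactSpace X] (f : X ≃ₜ X)
    (Δ : Set X) (q : ℕ) (hq : 1 ≤ q)
    (Y : Type) [TopologicalSpace Y] [CompactSpace Y]
    (g : Y → Y) (r : ℕ) (hr : 2 ≤ r)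
    (π₁ : Y → X) (π₂ : Y → (ℤ → Fin r))
    (hπ₁c : Continuous π₁) (hπ₁r : Set.range π₁ = Δ)
    (hsemi₁ : ∀ y, π₁ (g y) = (f ^ q) (π₁ y))
    (B : ℕ) (hfib : ∀ x : X, (π₁ ⁻¹' {x}).Finite ∧ (π₁ ⁻¹' {x}).ncard ≤ B)
    (hπ₂c : Continuous π₂) (hπ₂s : Function.Surjective π₂)
    (hsemi₂ : ∀ y, π₂ (g y) = bernoulliShift r (π₂ y))
    (hper : ∀ (n : ℕ) (s : ℤ → Fin r), (bernoulliShift r)^[n] s = s →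
      ∃ y : Y, π₂ y = s ∧ g^[n] y = y) :
    0 < Dynamics.coverEntropy (⇑f) Set.univ ∧
    (∀ n : ℕ, 1 ≤ n → ∃ S : Finset X,
      (↑S : Set X) ⊆ {x ∈ Δ | (f ^ (q * n)) x = x} ∧ ((r : ℝ) ^ n) / B ≤ S.card) ∧
    (∃ m : ℕ, 1 ≤ m ∧ ∃ c : ℝ, 1 < c ∧ ∀ n : ℕ, 1 ≤ n →
      ∃ S : Finset X, (↑S : Set X) ⊆ {x : X | (f ^ (m * n)) x = x} ∧ c ^ n ≤ S.card) := by
  have hsemi : Semiconj π₁ g (⇑f)^[q] := Homeomorph.coe_pow f q ▸ hsemi₁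
  have hB : 0 < B := by
    obtain ⟨y₀, -⟩ := hπ₂s fun _ => ⟨0, by omega⟩
    exact ((Set.ncard_pos (hfib _).1).2 ⟨y₀, rfl⟩).trans_le (hfib _).2
  have hfix (n : ℕ) (hn : 1 ≤ n) :
      ∃ S : Finset X, ↑S ⊆ {x ∈ Δ | (f ^ (q * n)) x = x} ∧ r ^ n ≤ B * S.card := by
    have : NeZero n := ⟨by omega⟩
    simpa only [← hπ₁r, Homeomorph.coe_pow, iterate_mul] using
      exists_finset_fixedPoints_card_ge hsemi hfib hper n
  refine ⟨coverEntropy_pos_of_horseshoe hq hr hπ₁c hsemi hfib hB hπ₂c hπ₂s hsemi₂,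
    fun n hn => ?_, ?_⟩
  · obtain ⟨S, hS, hcard⟩ := hfix n hn
    refine ⟨S, hS, div_le_of_le_mul₀ (by positivity) (by positivity) ?_⟩
    exact_mod_cast hcard.trans_eq (mul_comm _ _)
  · obtain ⟨k, hk, h2B⟩ := exists_pos_two_mul_le_pow hr B
    refine ⟨q * k, Nat.mul_pos hq hk, 2, one_lt_two, fun n hn => ?_⟩
    obtain ⟨S, hS, hcard⟩ := hfix (k * n) (Nat.mul_pos hk hn)
    refine ⟨S, fun x hx => by rw [Set.mem_ofPred_eq, mul_assoc]; exact (hS hx).2, ?_⟩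
    have hpow : (r ^ k) ^ n ≤ B ^ n * S.card :=
      calc (r ^ k) ^ n = r ^ (k * n) := (pow_mul r k n).symm
        _ ≤ B * S.card := hcard
        _ ≤ B ^ n * S.card := Nat.mul_le_mul_right _ (Nat.le_self_pow (by omega) B)
    exact_mod_cast two_pow_le_of_pow_le_pow_mul hB h2B hpow

/-- A homeomorphism of a compact metric space with a topological horseshoe has positive
topological entropy, the number of fixed points of `f^{qn}` in `Δ` is at least `rⁿ/B`,
and in particular some power of `f` has exponential growth of periodic points. -/
theorem statement15 {X : Type*} [MetricSpace X] [CompactSpace X] (f : X ≃ₜ X)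
    (Δ : Set X) (hΔc : IsCompact Δ) (q : ℕ) (hq : 1 ≤ q) (hinv : ⇑(f ^ q) '' Δ = Δ)
    (Y : Type) [TopologicalSpace Y] [CompactSpace Y] [T2Space Y]
    (g : Y → Y) (hgc : Continuous g) (r : ℕ) (hr : 2 ≤ r)
    (π₁ : Y → X) (π₂ : Y → (ℤ → Fin r))
    (hπ₁c : Continuous π₁) (hπ₁r : Set.range π₁ = Δ)
    (hsemi₁ : ∀ y, π₁ (g y) = (f ^ q) (π₁ y))
    (B : ℕ) (hfib : ∀ x : X, (π₁ ⁻¹' {x}).Finite ∧ (π₁ ⁻¹' {x}).ncard ≤ B)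
    (hπ₂c : Continuous π₂) (hπ₂s : Function.Surjective π₂)
    (hsemi₂ : ∀ y, π₂ (g y) = bernoulliShift r (π₂ y))
    (hper : ∀ (n : ℕ) (s : ℤ → Fin r), (bernoulliShift r)^[n] s = s →
      ∃ y : Y, π₂ y = s ∧ g^[n] y = y) :
    0 < Dynamics.coverEntropy (⇑f) Set.univ ∧
    (∀ n : ℕ, 1 ≤ n → ∃ S : Finset X,
      (↑S : Set X) ⊆ {x ∈ Δ | (f ^ (q * n)) x = x} ∧ ((r : ℝ) ^ n) / B ≤ S.card) ∧
    (∃ m : ℕ, 1 ≤ m ∧ ∃ c : ℝ, 1 < c ∧ ∀ n : ℕ, 1 ≤ n →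
      ∃ S : Finset X, (↑S : Set X) ⊆ {x : X | (f ^ (m * n)) x = x} ∧ c ^ n ≤ S.card) :=
  statement15_general f Δ q hq Y g r hr π₁ π₂ hπ₁c hπ₁r hsemi₁ B hfib hπ₂c hπ₂s hsemi₂ hper
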